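/- arXiv:2503.11526 — 2 statements merged into one kernel-verified Lean document; each statement's English description precedes it below -/
import Mathlib

section
/- Assume w_j ≤ w_0 for every j ∈ V, and let v ∈ V and i ∈ win_v. Then there exists a chain partition of T_v having T[v,i] as one of its parts, and the minimum total cost among all chain partitions of T_v having T[v,i] as one of their parts equals max_{p ∈ T[v,i]} s_p + Σ_j OPT(j), where the sum ranges over all j ∈ V with j ∉ T[v,i] whose parent lies in T[v,i]. -/
open Finset
open scoped Classical

noncomputable section

variable {V : Type} [Fintype V] [PartialOrder V]

/-- The chain `T[v,i]` : all vertices `p` with `v ≤ p ≤ i`. -/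
def chainCC (v i : V) : Finset V := univ.filter (fun p => v ≤ p ∧ p ≤ i)

/-- `p` is the parent of `j`. -/
def IsParent (p j : V) : Prop := p < j ∧ ¬ ∃ q, p < q ∧ q < j

/-- The window of `v`. -/
def win (w : V → ℝ) (w0 : ℝ) (v : V) : Finset V :=
  univ.filter (fun i => v ≤ i ∧ ∑ j ∈ chainCC v i, w j ≤ w0)

/-- The vertices `j` outside `T[v,i]` whose parent lies in `T[v,i]`. -/
def branchOff (v i : V) : Finset V :=
  univ.filter (fun j => j ∉ chainCC v i ∧ ∃ p ∈ chainCC v i, IsParent p j)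

/-- A chain partition of the subtree `T_v`: a family of nonempty pairwise-disjoint
parts covering `T_v`, each part pairwise comparable, order-convex, and of total
weight at most `w0`. -/
def IsChainPartition (w : V → ℝ) (w0 : ℝ) (v : V) (P : Finset (Finset V)) : Prop :=
  (∀ C ∈ P, C.Nonempty) ∧
  (∀ C ∈ P, ∀ a ∈ C, v ≤ a) ∧
  (∀ u : V, v ≤ u → ∃! C, C ∈ P ∧ u ∈ C) ∧
  (∀ C ∈ P, ∀ a ∈ C, ∀ b ∈ C, a ≤ b ∨ b ≤ a) ∧
  (∀ C ∈ P, ∀ a ∈ C, ∀ b ∈ C, ∀ p : V, a ≤ p → p ≤ b → p ∈ C) ∧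
  (∀ C ∈ P, ∑ j ∈ C, w j ≤ w0)

/-- Total cost of a partition: the sum over parts `C` of `max_{j ∈ C} s_j`. -/
def totalCost (s : V → ℝ) (P : Finset (Finset V)) : ℝ :=
  ∑ C ∈ P, sSup (s '' (C : Set V))

/-- `OPT v`: the minimum total cost of a chain partition of `T_v`. -/
def OPT (w : V → ℝ) (w0 : ℝ) (s : V → ℝ) (v : V) : ℝ :=
  sInf {c : ℝ | ∃ P : Finset (Finset V), IsChainPartition w w0 v P ∧ c = totalCost s P}

end


/-!
Removing the chain `T[v,i]` from `T_v` leaves the disjoint subtrees `T_j`, `j ∈ branchOff v i`: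
a vertex `u ∈ T_v` off the chain lies in `T_j` for exactly one such `j`, namely its least ancestor
off the chain. Hence a chain partition of `T_v` having `T[v,i]` as a part is the same thing as a
choice of chain partitions of the subtrees `T_j`, and its cost is the cost of `T[v,i]` plus theirs.
Optimising each `T_j` separately gives the formula; `w j ≤ w₀` makes every `T_j` partitionable
(into singletons), so that `OPT j` is attained.
-/

section ChainPartition

variable {V : Type} [PartialOrder V]

noncomputable def subtreeParts (P : Finset (Finset V)) (j : V) : Finset (Finset V) :=
  P.filter fun C => ∀ a ∈ C, j ≤ a

lemma mem_subtreeParts {P : Finset (Finset V)} {j : V} {C : Finset V} :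
    C ∈ subtreeParts P j ↔ C ∈ P ∧ ∀ a ∈ C, j ≤ a :=
  mem_filter

namespace IsChainPartition

variable {w : V → ℝ} {w0 : ℝ} {v : V} {P : Finset (Finset V)} {C : Finset V}

lemma nonempty (hP : IsChainPartition w w0 v P) (hC : C ∈ P) : C.Nonempty :=
  hP.1 C hC

lemma le_of_mem (hP : IsChainPartition w w0 v P) (hC : C ∈ P) {a : V} (ha : a ∈ C) : v ≤ a :=
  hP.2.1 C hC a ha

lemma existsUnique_mem (hP : IsChainPartition w w0 v P) {u : V} (hvu : v ≤ u) :
    ∃! C, C ∈ P ∧ u ∈ C :=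
  hP.2.2.1 u hvu

lemma le_total_of_mem (hP : IsChainPartition w w0 v P) (hC : C ∈ P) {a b : V} (ha : a ∈ C)
    (hb : b ∈ C) : a ≤ b ∨ b ≤ a :=
  hP.2.2.2.1 C hC a ha b hb

lemma mem_of_le_of_le (hP : IsChainPartition w w0 v P) (hC : C ∈ P) {a b p : V} (ha : a ∈ C)
    (hb : b ∈ C) (hap : a ≤ p) (hpb : p ≤ b) : p ∈ C :=
  hP.2.2.2.2.1 C hC a ha b hb p hap hpb

lemma sum_le (hP : IsChainPartition w w0 v P) (hC : C ∈ P) : ∑ j ∈ C, w j ≤ w0 :=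
  hP.2.2.2.2.2 C hC

lemma eq_of_mem_of_mem (hP : IsChainPartition w w0 v P) {D : Finset V} (hC : C ∈ P)
    (hD : D ∈ P) {a : V} (haC : a ∈ C) (haD : a ∈ D) : C = D :=
  (hP.existsUnique_mem (hP.le_of_mem hC haC)).unique ⟨hC, haC⟩ ⟨hD, haD⟩

lemma subtreeParts (hP : IsChainPartition w w0 v P) {j : V} (hvj : v ≤ j)
    (hclosed : ∀ C ∈ P, ∀ a ∈ C, ∀ b ∈ C, j ≤ a → j ≤ b) :
    IsChainPartition w w0 j (subtreeParts P j) := by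
  simp only [IsChainPartition, mem_subtreeParts]
  refine ⟨fun C hC => hP.nonempty hC.1, fun C hC => hC.2, fun u hju => ?_,
    fun C hC _ ha _ hb => hP.le_total_of_mem hC.1 ha hb,
    fun C hC _ ha _ hb _ => hP.mem_of_le_of_le hC.1 ha hb,
    fun C hC => hP.sum_le hC.1⟩
  obtain ⟨C, ⟨hC, huC⟩, huniq⟩ := hP.existsUnique_mem (hvj.trans hju)
  exact ⟨C, ⟨⟨hC, fun b hb => hclosed C hC u huC b hb hju⟩, huC⟩,
    fun D hD => huniq D ⟨hD.1.1, hD.2⟩⟩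

variable [Fintype V]

lemma singletons (hwin : ∀ j, w j ≤ w0) (v : V) :
    IsChainPartition w w0 v ((univ.filter (v ≤ ·)).image singleton) := by
  simp only [IsChainPartition, mem_image, mem_filter, mem_univ, true_and, forall_exists_index,
    and_imp, forall_apply_eq_imp_iff₂, mem_singleton, forall_eq, sum_singleton]
  refine ⟨fun _ _ => singleton_nonempty _, fun _ h => h,
    fun u hu => ⟨{u}, ⟨⟨u, hu, rfl⟩, mem_singleton_self u⟩, ?_⟩, fun _ _ => Or.inl le_rfl,
    fun a _ p hap hpa => le_antisymm hpa hap, fun j _ => hwin j⟩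
  rintro C ⟨⟨u', -, rfl⟩, hu⟩
  rw [mem_singleton.1 hu]

end IsChainPartition

variable [Fintype V] {w : V → ℝ} {w0 : ℝ}

lemma finite_totalCost_setOf_isChainPartition (s : V → ℝ) (v : V) :
    {c : ℝ | ∃ P, IsChainPartition w w0 v P ∧ c = totalCost s P}.Finite :=
  (Set.finite_range (totalCost s)).subset fun _ ⟨P, _, hc⟩ => ⟨P, hc.symm⟩

lemma OPT_le_totalCost {v : V} {P : Finset (Finset V)} (hP : IsChainPartition w w0 v P)
    (s : V → ℝ) : OPT w w0 s v ≤ totalCost s P :=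
  csInf_le (finite_totalCost_setOf_isChainPartition s v).bddBelow ⟨P, hP, rfl⟩

lemma exists_isChainPartition_totalCost_eq_OPT (hwin : ∀ j, w j ≤ w0) (s : V → ℝ) (v : V) :
    ∃ P, IsChainPartition w w0 v P ∧ totalCost s P = OPT w w0 s v := by
  obtain ⟨P, hP, hc⟩ := Set.Nonempty.csInf_mem
    (s := {c : ℝ | ∃ P, IsChainPartition w w0 v P ∧ c = totalCost s P})
    ⟨_, _, IsChainPartition.singletons hwin v, rfl⟩ (finite_totalCost_setOf_isChainPartition s v)
  exact ⟨P, hP, hc.symm⟩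

lemma mem_chainCC {v i p : V} : p ∈ chainCC v i ↔ v ≤ p ∧ p ≤ i := by
  simp [chainCC]

lemma coe_chainCC (v i : V) : (chainCC v i : Set V) = {p | v ≤ p ∧ p ≤ i} := by
  ext p; simp [chainCC]

lemma mem_win {v i : V} : i ∈ win w w0 v ↔ v ≤ i ∧ ∑ j ∈ chainCC v i, w j ≤ w0 := by
  simp [win]

lemma le_of_mem_branchOff {v i j : V} (hj : j ∈ branchOff v i) : v ≤ j := by
  obtain ⟨-, p, hp, hpj, -⟩ := (mem_filter.1 hj).2
  exact (mem_chainCC.1 hp).1.trans hpj.le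

lemma not_le_of_mem_branchOff {v i j : V} (hj : j ∈ branchOff v i) : ¬ j ≤ i := fun hji =>
  (mem_filter.1 hj).2.1 (mem_chainCC.2 ⟨le_of_mem_branchOff hj, hji⟩)

/-- The parent of `j` is on the chain, so nothing lies strictly between the chain and `j`. -/
lemma le_of_mem_branchOff_of_le (htree : ∀ a b c : V, a ≤ c → b ≤ c → a ≤ b ∨ b ≤ a)
    {v i j a b : V} (hj : j ∈ branchOff v i) (hja : j ≤ a) (hba : b ≤ a) (hbi : ¬ b ≤ i) :
    j ≤ b := by
  obtain ⟨-, p, hp, hpj, hparent⟩ := (mem_filter.1 hj).2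
  have hpi := (mem_chainCC.1 hp).2
  rcases htree j b a hja hba with hjb | hbj
  · exact hjb
  rcases hbj.eq_or_lt with rfl | hbj
  · exact le_rfl
  rcases htree p b j hpj.le hbj.le with hpb | hbp
  · exact absurd ⟨b, hpb.lt_of_ne (by rintro rfl; exact hbi hpi), hbj⟩ hparent
  · exact absurd (hbp.trans hpi) hbi

lemma eq_of_mem_branchOff_of_le (htree : ∀ a b c : V, a ≤ c → b ≤ c → a ≤ b ∨ b ≤ a)
    {v i j₁ j₂ a : V} (hj₁ : j₁ ∈ branchOff v i) (hj₂ : j₂ ∈ branchOff v i)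
    (h₁ : j₁ ≤ a) (h₂ : j₂ ≤ a) : j₁ = j₂ :=
  le_antisymm (le_of_mem_branchOff_of_le htree hj₁ h₁ h₂ (not_le_of_mem_branchOff hj₂))
    (le_of_mem_branchOff_of_le htree hj₂ h₂ h₁ (not_le_of_mem_branchOff hj₁))

lemma exists_mem_branchOff_le {v i u : V} (hvi : v ≤ i) (hvu : v ≤ u) (hui : ¬ u ≤ i) :
    ∃ j ∈ branchOff v i, j ≤ u := by
  obtain ⟨j, hj⟩ :=
    (Set.toFinite {p | v ≤ p ∧ p ≤ u ∧ ¬ p ≤ i}).exists_minimal ⟨u, hvu, le_rfl, hui⟩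
  obtain ⟨hvj, hju, hji⟩ := hj.prop
  have hvj : v < j := hvj.lt_of_ne (by rintro rfl; exact hji hvi)
  obtain ⟨p, hp⟩ := (Set.toFinite {p | v ≤ p ∧ p < j}).exists_maximal ⟨v, le_rfl, hvj⟩
  obtain ⟨hvp, hpj⟩ := hp.prop
  have hpi : p ≤ i := by_contra fun hpi => hj.not_lt ⟨hvp, hpj.le.trans hju, hpi⟩ hpj
  refine ⟨j, mem_filter.2 ⟨mem_univ _, fun h => hji (mem_chainCC.1 h).2,
    p, mem_chainCC.2 ⟨hvp, hpi⟩, hpj, ?_⟩, hju⟩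
  rintro ⟨q, hpq, hqj⟩
  exact hp.not_gt ⟨hvp.trans hpq.le, hqj⟩ hpq

variable {v i : V}

lemma existsUnique_mem_insert_chainCC_biUnion
    (htree : ∀ a b c : V, a ≤ c → b ≤ c → a ≤ b ∨ b ≤ a) (hvi : v ≤ i)
    {Pf : V → Finset (Finset V)} (hPf : ∀ j ∈ branchOff v i, IsChainPartition w w0 j (Pf j))
    {u : V} (hvu : v ≤ u) :
    ∃! C, C ∈ insert (chainCC v i) ((branchOff v i).biUnion Pf) ∧ u ∈ C := by
  simp only [mem_insert, mem_biUnion]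
  by_cases hui : u ≤ i
  · refine ⟨chainCC v i, ⟨Or.inl rfl, mem_chainCC.2 ⟨hvu, hui⟩⟩, ?_⟩
    rintro D ⟨rfl | ⟨j, hj, hDj⟩, huD⟩
    · rfl
    · exact absurd (((hPf j hj).le_of_mem hDj huD).trans hui) (not_le_of_mem_branchOff hj)
  · obtain ⟨j, hj, hju⟩ := exists_mem_branchOff_le hvi hvu hui
    obtain ⟨C, ⟨hC, huC⟩, huniq⟩ := (hPf j hj).existsUnique_mem hju
    refine ⟨C, ⟨Or.inr ⟨j, hj, hC⟩, huC⟩, ?_⟩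
    rintro D ⟨rfl | ⟨j', hj', hDj'⟩, huD⟩
    · exact absurd (mem_chainCC.1 huD).2 hui
    · obtain rfl := eq_of_mem_branchOff_of_le htree hj' hj ((hPf j' hj').le_of_mem hDj' huD) hju
      exact huniq D ⟨hDj', huD⟩

lemma isChainPartition_insert_chainCC_biUnion
    (htree : ∀ a b c : V, a ≤ c → b ≤ c → a ≤ b ∨ b ≤ a) (hvi : v ≤ i)
    (hwi : ∑ j ∈ chainCC v i, w j ≤ w0) {Pf : V → Finset (Finset V)}
    (hPf : ∀ j ∈ branchOff v i, IsChainPartition w w0 j (Pf j)) :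
    IsChainPartition w w0 v (insert (chainCC v i) ((branchOff v i).biUnion Pf)) := by
  have hmem : ∀ C, C ∈ insert (chainCC v i) ((branchOff v i).biUnion Pf) ↔
      C = chainCC v i ∨ ∃ j ∈ branchOff v i, C ∈ Pf j := by
    simp
  refine ⟨fun C hC => ?_, fun C hC a ha => ?_,
    fun u => existsUnique_mem_insert_chainCC_biUnion htree hvi hPf,
    fun C hC a ha b hb => ?_, fun C hC a ha b hb p hap hpb => ?_, fun C hC => ?_⟩ <;>
    rcases (hmem C).1 hC with rfl | ⟨j, hj, hCj⟩
  · exact ⟨v, mem_chainCC.2 ⟨le_rfl, hvi⟩⟩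
  · exact (hPf j hj).nonempty hCj
  · exact (mem_chainCC.1 ha).1
  · exact (le_of_mem_branchOff hj).trans ((hPf j hj).le_of_mem hCj ha)
  · exact htree a b i (mem_chainCC.1 ha).2 (mem_chainCC.1 hb).2
  · exact (hPf j hj).le_total_of_mem hCj ha hb
  · exact mem_chainCC.2 ⟨(mem_chainCC.1 ha).1.trans hap, hpb.trans (mem_chainCC.1 hb).2⟩
  · exact (hPf j hj).mem_of_le_of_le hCj ha hb hap hpb
  · exact hwi
  · exact (hPf j hj).sum_le hCj

lemma totalCost_insert_chainCC_biUnion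
    (htree : ∀ a b c : V, a ≤ c → b ≤ c → a ≤ b ∨ b ≤ a) {Pf : V → Finset (Finset V)}
    (hPf : ∀ j ∈ branchOff v i, IsChainPartition w w0 j (Pf j)) (s : V → ℝ) :
    totalCost s (insert (chainCC v i) ((branchOff v i).biUnion Pf)) =
      sSup (s '' {p | v ≤ p ∧ p ≤ i}) + ∑ j ∈ branchOff v i, totalCost s (Pf j) := by
  have hdisj : (branchOff v i : Set V).PairwiseDisjoint Pf := by
    intro j₁ hj₁ j₂ hj₂ hne
    refine disjoint_left.2 fun C hC₁ hC₂ => hne ?_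
    obtain ⟨a, ha⟩ := (hPf j₁ hj₁).nonempty hC₁
    exact eq_of_mem_branchOff_of_le htree hj₁ hj₂ ((hPf j₁ hj₁).le_of_mem hC₁ ha)
      ((hPf j₂ hj₂).le_of_mem hC₂ ha)
  have hchain : chainCC v i ∉ (branchOff v i).biUnion Pf := by
    simp only [mem_biUnion, not_exists, not_and]
    intro j hj hC
    obtain ⟨a, ha⟩ := (hPf j hj).nonempty hC
    exact not_le_of_mem_branchOff hj (((hPf j hj).le_of_mem hC ha).trans (mem_chainCC.1 ha).2)
  rw [totalCost, sum_insert hchain, sum_biUnion hdisj, coe_chainCC]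
  rfl

namespace IsChainPartition

variable {P : Finset (Finset V)} {C : Finset V}

lemma not_le_of_mem (hP : IsChainPartition w w0 v P) (hchain : chainCC v i ∈ P) (hC : C ∈ P)
    (hCchain : C ≠ chainCC v i) {a : V} (ha : a ∈ C) : ¬ a ≤ i := fun hai =>
  hCchain (hP.eq_of_mem_of_mem hC hchain ha (mem_chainCC.2 ⟨hP.le_of_mem hC ha, hai⟩))

lemma le_of_le_of_mem_branchOff (htree : ∀ a b c : V, a ≤ c → b ≤ c → a ≤ b ∨ b ≤ a)
    (hP : IsChainPartition w w0 v P) (hchain : chainCC v i ∈ P) {j : V}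
    (hj : j ∈ branchOff v i) (hC : C ∈ P) {a b : V} (ha : a ∈ C) (hb : b ∈ C) (hja : j ≤ a) :
    j ≤ b := by
  have hCchain : C ≠ chainCC v i := by
    rintro rfl
    exact not_le_of_mem_branchOff hj (hja.trans (mem_chainCC.1 ha).2)
  rcases hP.le_total_of_mem hC ha hb with hab | hba
  · exact hja.trans hab
  · exact le_of_mem_branchOff_of_le htree hj hja hba (hP.not_le_of_mem hchain hC hCchain hb)

lemma eq_insert_chainCC_biUnion (htree : ∀ a b c : V, a ≤ c → b ≤ c → a ≤ b ∨ b ≤ a)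
    (hP : IsChainPartition w w0 v P) (hchain : chainCC v i ∈ P) :
    P = insert (chainCC v i) ((branchOff v i).biUnion (_root_.subtreeParts P)) := by
  obtain ⟨p, hp⟩ := hP.nonempty hchain
  have hvi : v ≤ i := (mem_chainCC.1 hp).1.trans (mem_chainCC.1 hp).2
  ext C
  simp only [mem_insert, mem_biUnion, mem_subtreeParts]
  constructor
  · intro hC
    by_cases hCchain : C = chainCC v i
    · exact Or.inl hCchain
    obtain ⟨a, ha⟩ := hP.nonempty hC
    obtain ⟨j, hj, hja⟩ := exists_mem_branchOff_le hvi (hP.le_of_mem hC ha)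
      (hP.not_le_of_mem hchain hC hCchain ha)
    exact Or.inr ⟨j, hj, hC, fun b hb =>
      hP.le_of_le_of_mem_branchOff htree hchain hj hC ha hb hja⟩
  · rintro (rfl | ⟨j, -, hC, -⟩)
    exacts [hchain, hC]

end IsChainPartition

end ChainPartition

theorem stmt_13_general (V : Type) [Fintype V] [PartialOrder V]
    (htree : ∀ a b c : V, a ≤ c → b ≤ c → a ≤ b ∨ b ≤ a)
    (w : V → ℝ) (s : V → ℝ) (w0 : ℝ)
    (hwin : ∀ j : V, w j ≤ w0)
    (v i : V) (hi : i ∈ win w w0 v) :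
    IsLeast {c : ℝ | ∃ P : Finset (Finset V),
        IsChainPartition w w0 v P ∧ chainCC v i ∈ P ∧ c = totalCost s P}
      (sSup (s '' {p : V | v ≤ p ∧ p ≤ i}) + ∑ j ∈ branchOff v i, OPT w w0 s j) := by
  obtain ⟨hvi, hwi⟩ := mem_win.1 hi
  constructor
  · choose Pf hPf hcost using exists_isChainPartition_totalCost_eq_OPT hwin s
    refine ⟨_, isChainPartition_insert_chainCC_biUnion htree hvi hwi fun j _ => hPf j,
      mem_insert_self _ _, ?_⟩
    rw [totalCost_insert_chainCC_biUnion htree (fun j _ => hPf j),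
      sum_congr rfl fun j _ => hcost j]
  · rintro c ⟨P, hP, hchain, rfl⟩
    have hparts : ∀ j ∈ branchOff v i, IsChainPartition w w0 j (subtreeParts P j) :=
      fun j hj => hP.subtreeParts (le_of_mem_branchOff hj) fun C hC a ha b hb =>
        hP.le_of_le_of_mem_branchOff htree hchain hj hC ha hb
    rw [hP.eq_insert_chainCC_biUnion htree hchain, totalCost_insert_chainCC_biUnion htree hparts]
    gcongr with j hj
    exact OPT_le_totalCost (hparts j hj) s

theorem stmt_13 (V : Type) [Fintype V] [Nonempty V] [PartialOrder V]
    (htree : ∀ a b c : V, a ≤ c → b ≤ c → a ≤ b ∨ b ≤ a)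
    (w : V → ℝ) (s : V → ℝ) (w0 : ℝ)
    (hw : ∀ i : V, 0 ≤ w i) (hw0 : 0 ≤ w0)
    (hwin : ∀ j : V, w j ≤ w0)
    (v i : V) (hi : i ∈ win w w0 v) :
    IsLeast {c : ℝ | ∃ P : Finset (Finset V),
        IsChainPartition w w0 v P ∧ chainCC v i ∈ P ∧ c = totalCost s P}
      (sSup (s '' {p : V | v ≤ p ∧ p ≤ i}) + ∑ j ∈ branchOff v i, OPT w w0 s j) :=
  stmt_13_general V htree w s w0 hwin v i hi
end

section
/- Let v ∈ V and i ∈ T_v. If i is r-maximal in T_v, then i is the dominant vertex of the chain T[v,i] (i.e., r_i = max_{p ∈ T[v,i]} r_p). If i ≠ v and i is not r-maximal in T_v, then nextʳ_v(i) is the dominant vertex of the chain T[v,i] (i.e., r_{nextʳ_v(i)} = max_{p ∈ T[v,i]} r_p). -/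
open Finset
open scoped Classical

noncomputable section

variable {V : Type} [Fintype V] [PartialOrder V]

/-- The chain `T[v,i)` : `T[v,i]` without `i`. -/
def chainCO (v i : V) : Finset V := (chainCC v i).erase i

/-- `u` is s-maximal in `T_v`. -/
def SMax (s : V → ℝ) (v u : V) : Prop := v ≤ u ∧ ∀ p ∈ chainCO v u, s p < s u

/-- `win*_v`: the s-maximal vertices of the window of `v`. -/
def winStar (w : V → ℝ) (w0 : ℝ) (s : V → ℝ) (v : V) : Finset V :=
  (win w w0 v).filter (fun i => SMax s v i)

/-- `win⁻_v = win_v \ win*_v`. -/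
def winMinus (w : V → ℝ) (w0 : ℝ) (s : V → ℝ) (v : V) : Finset V :=
  win w w0 v \ winStar w w0 s v

/-- `next_v(u)`: the greatest (closest to `u`) s-maximal element of `T[v,u)`,
if such a greatest element exists (junk value `v` otherwise). -/
def nxt (s : V → ℝ) (v u : V) : V :=
  if h : ∃ x ∈ chainCO v u, SMax s v x ∧ ∀ y ∈ chainCO v u, SMax s v y → y ≤ x
  then h.choose else v

/-- `sum_F(v,i) = Σ F(j)` over `j ∉ T[v,i]` whose parent lies in `T[v,i]`. -/
def sumF (F : V → ℝ) (v i : V) : ℝ := ∑ j ∈ branchOff v i, F j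

/-- `cost_F(v,i)`: `sum_F(v,i) + s_i` if `i ∈ win*_v`, and
`sum_F(v,i) + s_{next_v(i)}` otherwise (in particular for `i ∈ win⁻_v`). -/
def costF (w : V → ℝ) (w0 : ℝ) (s : V → ℝ) (F : V → ℝ) (v i : V) : ℝ :=
  if i ∈ winStar w w0 s v then sumF F v i + s i else sumF F v i + s (nxt s v i)

end

section Dominant

variable {V : Type} [Fintype V] [PartialOrder V] {s : V → ℝ} {v i m : V}

theorem mem_chainCO {p : V} : p ∈ chainCO v i ↔ v ≤ p ∧ p < i := by
  simp [chainCO, chainCC, lt_iff_le_and_ne, and_comm, and_left_comm]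

theorem SMax.isGreatest_image_Icc (h : SMax s v i) : IsGreatest (s '' Set.Icc v i) (s i) := by
  refine ⟨⟨i, ⟨h.1, le_rfl⟩, rfl⟩, ?_⟩
  rintro _ ⟨p, ⟨hvp, hpi⟩, rfl⟩
  rcases hpi.lt_or_eq with hpi | rfl
  · exact (h.2 p (mem_chainCO.2 ⟨hvp, hpi⟩)).le
  · exact le_rfl

theorem smax_of_dominant (hs : Function.Injective s) (hm : m ∈ Set.Icc v i)
    (hmax : ∀ p ∈ Set.Icc v i, s p ≤ s m) : SMax s v m := by
  refine ⟨hm.1, fun p hp => ?_⟩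
  obtain ⟨hvp, hpm⟩ := mem_chainCO.1 hp
  exact (hmax p ⟨hvp, hpm.le.trans hm.2⟩).lt_of_ne (hs.ne hpm.ne)

theorem SMax.le_of_dominant (htree : ∀ a b c : V, a ≤ c → b ≤ c → a ≤ b ∨ b ≤ a)
    {y : V} (hy : y ∈ chainCO v i) (hyS : SMax s v y) (hm : m ∈ Set.Icc v i)
    (hmax : ∀ p ∈ Set.Icc v i, s p ≤ s m) : y ≤ m := by
  obtain ⟨hvy, hyi⟩ := mem_chainCO.1 hy
  rcases htree y m i hyi.le hm.2 with hym | hmy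
  · exact hym
  rcases hmy.lt_or_eq with hmy | rfl
  -- `m ∈ T[v,y)` would have to be outranked by `y`
  · exact absurd (hmax y ⟨hvy, hyi.le⟩) (hyS.2 m (mem_chainCO.2 ⟨hm.1, hmy⟩)).not_ge
  · exact le_rfl

theorem nxt_eq {u x : V} (hx : x ∈ chainCO v u) (hxS : SMax s v x)
    (hgt : ∀ y ∈ chainCO v u, SMax s v y → y ≤ x) : nxt s v u = x := by
  have hex : ∃ x ∈ chainCO v u, SMax s v x ∧ ∀ y ∈ chainCO v u, SMax s v y → y ≤ x :=
    ⟨x, hx, hxS, hgt⟩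
  obtain ⟨hcO, hcS, hcgt⟩ := hex.choose_spec
  rw [nxt, dif_pos hex]
  exact le_antisymm (hgt _ hcO hcS) (hcgt x hx hxS)

end Dominant

theorem stmt_16_general (V : Type) [Fintype V] [PartialOrder V]
    (htree : ∀ a b c : V, a ≤ c → b ≤ c → a ≤ b ∨ b ≤ a)
    (r : V → ℝ) (hr : Function.Injective r)
    (v i : V) (hvi : v ≤ i) :
    (SMax r v i → r i = sSup (r '' {p : V | v ≤ p ∧ p ≤ i})) ∧
    (i ≠ v → ¬ SMax r v i →
      r (nxt r v i) = sSup (r '' {p : V | v ≤ p ∧ p ≤ i})) := by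
  refine ⟨fun hS => hS.isGreatest_image_Icc.csSup_eq.symm, fun _ hnS => ?_⟩
  obtain ⟨m, hm, hmax⟩ :=
    (Set.Icc v i).exists_max_image r (Set.toFinite _) (Set.nonempty_Icc.2 hvi)
  have hmS : SMax r v m := smax_of_dominant hr hm hmax
  have hmi : m < i := hm.2.lt_of_ne fun h => hnS (h ▸ hmS)
  rw [nxt_eq (mem_chainCO.2 ⟨hm.1, hmi⟩) hmS fun y hy hyS => hyS.le_of_dominant htree hy hm hmax]
  have hdom : IsGreatest (r '' Set.Icc v i) (r m) := ⟨⟨m, hm, rfl⟩, Set.forall_mem_image.2 hmax⟩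
  exact hdom.csSup_eq.symm

/-- In the generalized problem, `u` is r-maximal in `T_v` iff it is "s-maximal"
with respect to the rank function `r`, and `nextʳ_v(u) = nxt r v u`. -/
theorem stmt_16 (V : Type) [Fintype V] [Nonempty V] [PartialOrder V]
    (htree : ∀ a b c : V, a ≤ c → b ≤ c → a ≤ b ∨ b ≤ a)
    (r : V → ℝ) (hr : Function.Injective r)
    (v i : V) (hvi : v ≤ i) :
    (SMax r v i → r i = sSup (r '' {p : V | v ≤ p ∧ p ≤ i})) ∧
    (i ≠ v → ¬ SMax r v i →
      r (nxt r v i) = sSup (r '' {p : V | v ≤ p ∧ p ≤ i})) :=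
  stmt_16_general V htree r hr v i hvi
end
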